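/- arXiv:1801.05193 — 3 statements merged into one kernel-verified Lean document; each statement's English description precedes it below -/
import Mathlib

section
/- Fix k ≥ 1 and t > 0. The series u(x,t) = Σ_{n=0}^∞ (f_k^{(n)}(t)/(2n)!) x^{2n}, where f_k(t) = exp(-t^{-2k}), converges absolutely and uniformly on every compact subset of ℝ. -/
/-!
Since `t > 0`, the function `s ↦ exp (-1 / s ^ (2k))` is real-analytic at `t`, so the Cauchy
estimates give `|f⁽ⁿ⁾(t)| ≤ C n! / rⁿ`. Together with `(n!)² ≤ (2n)!` this bounds the `n`-th term
of the series on `|x| ≤ B` by `C (B² / r)ⁿ / n!`, the terms of an exponential series, and the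
Weierstrass M-test finishes the proof.
-/

open scoped Nat

theorem AnalyticAt.exists_norm_iteratedDeriv_le {𝕜 F : Type*} [NontriviallyNormedField 𝕜]
    [NormedAddCommGroup F] [NormedSpace 𝕜 F] [CompleteSpace F] {f : 𝕜 → F} {x : 𝕜}
    (hf : AnalyticAt 𝕜 f x) :
    ∃ C r : ℝ, 0 < r ∧ ∀ n, ‖iteratedDeriv n f x‖ ≤ C * n ! / r ^ n := by
  obtain ⟨p, R, hp⟩ := hf
  obtain ⟨r, hr0, hrR⟩ := ENNReal.lt_iff_exists_nnreal_btwn.mp (hp.r_pos.trans_le hp.r_le)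
  obtain ⟨C, -, hC⟩ := p.norm_mul_pow_le_of_lt_radius hrR
  have hr : (0 : ℝ) < r := by exact_mod_cast hr0
  refine ⟨C, r, hr, fun n => ?_⟩
  have hcoeff : ‖p n fun _ => (1 : 𝕜)‖ ≤ ‖p n‖ := ((p n).le_opNorm _).trans_eq (by simp)
  calc ‖iteratedDeriv n f x‖ ≤ n ! * ‖p n fun _ => (1 : 𝕜)‖ := by
        rw [iteratedDeriv_eq_iteratedFDeriv, ← hp.factorial_smul]
        exact norm_nsmul_le
    _ ≤ n ! * (C / r ^ n) := by
        gcongr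
        rw [le_div_iff₀ (by positivity)]
        exact (mul_le_mul_of_nonneg_right hcoeff (by positivity)).trans (hC n)
    _ = C * n ! / r ^ n := by ring

theorem Nat.factorial_mul_factorial_le_factorial_two_mul (n : ℕ) : n ! * n ! ≤ (2 * n)! := by
  simpa [two_mul] using
    Nat.le_of_dvd (Nat.factorial_pos _) (Nat.factorial_mul_factorial_dvd_factorial_add n n)

section FactorialBound

variable {a : ℕ → ℝ} {C r : ℝ}

theorem abs_div_factorial_two_mul_mul_pow_le (ha : ∀ n, |a n| ≤ C * n ! / r ^ n)
    {B x : ℝ} (hx : |x| ≤ B) (n : ℕ) :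
    |a n / (2 * n)! * x ^ (2 * n)| ≤ C * (B ^ 2 / r) ^ n / n ! := by
  have hfac : (n ! : ℝ) * n ! ≤ (2 * n)! := by
    exact_mod_cast Nat.factorial_mul_factorial_le_factorial_two_mul n
  calc |a n / (2 * n)! * x ^ (2 * n)| = |a n| / (2 * n)! * |x| ^ (2 * n) := by
        rw [abs_mul, abs_div, abs_pow, Nat.abs_cast]
    _ ≤ C * n ! / r ^ n / (n ! * n !) * B ^ (2 * n) := by
        have hC : 0 ≤ C * n ! / r ^ n := (abs_nonneg _).trans (ha n)
        gcongr
        · exact ha n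
    _ = C * (B ^ 2 / r) ^ n / n ! := by
        rw [div_pow, ← pow_mul]
        field_simp

theorem summable_abs_div_factorial_two_mul_mul_pow (ha : ∀ n, |a n| ≤ C * n ! / r ^ n)
    (x : ℝ) :
    Summable fun n => |a n / (2 * n)! * x ^ (2 * n)| := by
  refine .of_nonneg_of_le (fun n => abs_nonneg _)
    (abs_div_factorial_two_mul_mul_pow_le ha le_rfl) ?_
  exact ((Real.summable_pow_div_factorial _).mul_left C).congr fun n => (mul_div_assoc ..).symm

theorem tendstoUniformlyOn_sum_div_factorial_two_mul_mul_pow (ha : ∀ n, |a n| ≤ C * n ! / r ^ n)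
    {K : Set ℝ} (hK : Bornology.IsBounded K) :
    TendstoUniformlyOn (fun N x => ∑ n ∈ Finset.range N, a n / (2 * n)! * x ^ (2 * n))
      (fun x => ∑' n, a n / (2 * n)! * x ^ (2 * n)) Filter.atTop K := by
  obtain ⟨B, hB⟩ := hK.subset_closedBall 0
  refine tendstoUniformlyOn_tsum_nat ?_ fun n x hx =>
    abs_div_factorial_two_mul_mul_pow_le ha (by simpa using hB hx) n
  exact ((Real.summable_pow_div_factorial _).mul_left C).congr fun n => (mul_div_assoc ..).symm

end FactorialBound

theorem tychonoff_series_converges_general (k : ℕ) (t : ℝ) (ht : 0 < t) :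
    (∀ x : ℝ, Summable (fun n : ℕ =>
        |iteratedDeriv n (fun s : ℝ => Real.exp (-1 / s ^ (2 * k))) t
          / ((2 * n).factorial : ℝ) * x ^ (2 * n)|)) ∧
    (∀ K : Set ℝ, IsCompact K →
      TendstoUniformlyOn
        (fun (N : ℕ) (x : ℝ) => ∑ n ∈ Finset.range N,
          iteratedDeriv n (fun s : ℝ => Real.exp (-1 / s ^ (2 * k))) t
            / ((2 * n).factorial : ℝ) * x ^ (2 * n))
        (fun x : ℝ => ∑' n : ℕ,
          iteratedDeriv n (fun s : ℝ => Real.exp (-1 / s ^ (2 * k))) t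
            / ((2 * n).factorial : ℝ) * x ^ (2 * n))
        Filter.atTop K) := by
  have hf : AnalyticAt ℝ (fun s : ℝ => Real.exp (-1 / s ^ (2 * k))) t :=
    (analyticAt_const.div (analyticAt_id.pow _) (pow_ne_zero _ ht.ne')).rexp
  obtain ⟨C, r, -, hbound⟩ := hf.exists_norm_iteratedDeriv_le
  exact ⟨summable_abs_div_factorial_two_mul_mul_pow hbound,
    fun K hK => tendstoUniformlyOn_sum_div_factorial_two_mul_mul_pow hbound hK.isBounded⟩

theorem tychonoff_series_converges (k : ℕ) (hk : 1 ≤ k) (t : ℝ) (ht : 0 < t) :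
    (∀ x : ℝ, Summable (fun n : ℕ =>
        |iteratedDeriv n (fun s : ℝ => Real.exp (-1 / s ^ (2 * k))) t
          / ((2 * n).factorial : ℝ) * x ^ (2 * n)|)) ∧
    (∀ K : Set ℝ, IsCompact K →
      TendstoUniformlyOn
        (fun (N : ℕ) (x : ℝ) => ∑ n ∈ Finset.range N,
          iteratedDeriv n (fun s : ℝ => Real.exp (-1 / s ^ (2 * k))) t
            / ((2 * n).factorial : ℝ) * x ^ (2 * n))
        (fun x : ℝ => ∑' n : ℕ,
          iteratedDeriv n (fun s : ℝ => Real.exp (-1 / s ^ (2 * k))) t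
            / ((2 * n).factorial : ℝ) * x ^ (2 * n))
        Filter.atTop K) :=
  tychonoff_series_converges_general k t ht
end

section
/- Fix k ≥ 1. The Tychonoff solution u_k(x,t) = Σ_{n=0}^∞ (f_k^{(n)}(t)/(2n)!) x^{2n}, with f_k(t) = exp(-t^{-2k}), converges to 0 in the sense of distributions on ℝ as t → 0⁺; more concretely, for every compactly supported continuous test function φ, ∫_ℝ u_k(x,t) φ(x) dx → 0 as t → 0⁺. -/
open Filter Metric Topology MeasureTheory

/-
For `t > 0`, every `z` in the disc of radius `εt` about `t` satisfies `Re z⁻ᵐ ≥ t⁻ᵐ / 2` (by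
homogeneity this only has to be checked near `z = 1`), so `|exp (-z⁻ᵐ)| ≤ exp (-t⁻ᵐ / 2)` there,
and Cauchy's estimate bounds the `n`-th derivative of `f t = exp (-t⁻ᵐ)` by
`n! exp (-t⁻ᵐ / 2) / (εt)ⁿ`. As `n!² ≤ (2n)!`, the Tychonoff series is then at most
`exp (-t⁻ᵐ / 2) exp (x² / (εt))`, which tends to `0` uniformly on the support of the test function
as `t → 0⁺` because `m = 2k > 1`.
-/

theorem iteratedDeriv_eq_re_iteratedDeriv_of_eq_re {f : ℝ → ℝ} {F : ℂ → ℂ} {S : Set ℂ}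
    (hS : IsOpen S) (hF : DifferentiableOn ℂ F S) (hf : ∀ t : ℝ, (t : ℂ) ∈ S → f t = (F t).re)
    (n : ℕ) {t : ℝ} (ht : (t : ℂ) ∈ S) :
    iteratedDeriv n f t = (iteratedDeriv n F t).re := by
  induction n generalizing t with
  | zero => simpa using hf t ht
  | succ n ih =>
    have h_eventually : iteratedDeriv n f =ᶠ[𝓝 t] fun s : ℝ => (iteratedDeriv n F s).re :=
      eventually_of_mem ((hS.preimage Complex.continuous_ofReal).mem_nhds ht) fun s hs => ih hs
    have hF' : HasDerivAt (iteratedDeriv n F) (iteratedDeriv (n + 1) F t) t := by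
      rw [iteratedDeriv_succ, iteratedDeriv_eq_iterate]
      exact (((hF.analyticOnNhd hS).iterated_deriv n) t ht).differentiableAt.hasDerivAt
    rw [iteratedDeriv_succ, h_eventually.deriv_eq, hF'.real_of_complex.deriv]

theorem exists_forall_closedBall_half_inv_pow_le_re_inv_pow (m : ℕ) :
    ∃ ε > 0, ∀ t : ℝ, 0 < t → ∀ z ∈ closedBall (t : ℂ) (ε * t),
      z ≠ 0 ∧ 1 / 2 * (t ^ m)⁻¹ ≤ ((z ^ m)⁻¹).re := by
  have hnhds : {w : ℂ | w ≠ 0 ∧ 1 / 2 < ((w ^ m)⁻¹).re} ∈ 𝓝 (1 : ℂ) := by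
    have hc : ContinuousAt (fun w : ℂ => ((w ^ m)⁻¹).re) 1 :=
      Complex.continuous_re.continuousAt.comp ((continuous_pow m).continuousAt.inv₀ (by simp))
    exact (eventually_ne_nhds one_ne_zero).and
      (continuousAt_const.eventually_lt hc (by norm_num))
  obtain ⟨ε, hε, hball⟩ := nhds_basis_closedBall.mem_iff.mp hnhds
  refine ⟨ε, hε, fun t ht z hz => ?_⟩
  have ht' : (t : ℂ) ≠ 0 := by exact_mod_cast ht.ne'
  have hw : z / t ∈ closedBall (1 : ℂ) ε := by
    rw [mem_closedBall, dist_eq_norm, ← div_self ht', ← sub_div, norm_div, Complex.norm_real,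
      Real.norm_of_nonneg ht.le, div_le_iff₀ ht, ← dist_eq_norm]
    exact hz
  obtain ⟨hw0, hre⟩ := hball hw
  have hz_eq : (z ^ m)⁻¹ = ((t ^ m)⁻¹ : ℝ) * ((z / t) ^ m)⁻¹ := by
    push_cast
    rw [div_pow, inv_div, div_eq_mul_inv, inv_mul_cancel_left₀ (pow_ne_zero _ ht')]
  refine ⟨by simpa [ht'] using hw0, ?_⟩
  rw [hz_eq, Complex.re_ofReal_mul, mul_comm]
  exact mul_le_mul_of_nonneg_left hre.le (by positivity)

theorem differentiableOn_cexp_neg_inv_pow (m : ℕ) :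
    DifferentiableOn ℂ (fun z : ℂ => Complex.exp (-1 / z ^ m)) {z | z ≠ 0} := fun z hz => by
  have : z ^ m ≠ 0 := pow_ne_zero m hz
  fun_prop (disch := assumption)

theorem exists_norm_iteratedDeriv_cexp_neg_inv_pow_le (m : ℕ) :
    ∃ ε > 0, ∀ t : ℝ, 0 < t → ∀ n : ℕ,
      ‖iteratedDeriv n (fun z : ℂ => Complex.exp (-1 / z ^ m)) t‖
        ≤ n.factorial * Real.exp (-(1 / 2) * (t ^ m)⁻¹) / (ε * t) ^ n := by
  obtain ⟨ε, hε, hball⟩ := exists_forall_closedBall_half_inv_pow_le_re_inv_pow m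
  refine ⟨ε, hε, fun t ht n => ?_⟩
  refine Complex.norm_iteratedDeriv_le_of_forall_mem_sphere_norm_le n (by positivity) ?_ ?_
  · exact ((differentiableOn_cexp_neg_inv_pow m).mono fun z hz =>
      (hball t ht z hz).1).diffContOnCl_ball subset_rfl
  · intro z hz
    rw [Complex.norm_exp, Real.exp_le_exp, div_eq_mul_inv, neg_one_mul, Complex.neg_re]
    linarith [(hball t ht z (sphere_subset_closedBall hz)).2]

theorem exists_abs_iteratedDeriv_exp_neg_inv_pow_le (m : ℕ) :
    ∃ ε > 0, ∀ t : ℝ, 0 < t → ∀ n : ℕ,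
      |iteratedDeriv n (fun s : ℝ => Real.exp (-1 / s ^ m)) t|
        ≤ n.factorial * Real.exp (-(1 / 2) * (t ^ m)⁻¹) / (ε * t) ^ n := by
  obtain ⟨ε, hε, hbound⟩ := exists_norm_iteratedDeriv_cexp_neg_inv_pow_le m
  refine ⟨ε, hε, fun t ht n => ?_⟩
  have h_re : ∀ s : ℝ, (s : ℂ) ∈ {z : ℂ | z ≠ 0} →
      Real.exp (-1 / s ^ m) = (Complex.exp (-1 / (s : ℂ) ^ m)).re := fun s _ => by
    rw [← Complex.exp_ofReal_re]
    push_cast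
    rfl
  rw [iteratedDeriv_eq_re_iteratedDeriv_of_eq_re isOpen_ne (differentiableOn_cexp_neg_inv_pow m)
    h_re n (Complex.ofReal_ne_zero.mpr ht.ne')]
  exact (Complex.abs_re_le_norm _).trans (hbound t ht n)

theorem abs_tsum_div_factorial_two_mul_mul_pow_le {a : ℕ → ℝ} {M r : ℝ} (hr : 0 < r)
    (ha : ∀ n, |a n| ≤ n.factorial * M / r ^ n) (x : ℝ) :
    |∑' n, a n / (2 * n).factorial * x ^ (2 * n)| ≤ M * Real.exp (x ^ 2 / r) := by
  have hM : 0 ≤ M := by simpa using (abs_nonneg _).trans (ha 0)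
  have hterm : ∀ n,
      |a n / (2 * n).factorial * x ^ (2 * n)| ≤ M * ((x ^ 2 / r) ^ n / n.factorial) := by
    intro n
    have hfact : (n.factorial * n.factorial : ℝ) ≤ (2 * n).factorial := by
      rw [two_mul]
      exact_mod_cast Nat.le_of_dvd (Nat.factorial_pos _)
        (Nat.factorial_mul_factorial_dvd_factorial_add n n)
    calc |a n / (2 * n).factorial * x ^ (2 * n)|
        = |a n| / (2 * n).factorial * (x ^ 2) ^ n := by
          rw [abs_mul, abs_div, Nat.abs_cast, pow_mul, abs_pow, abs_sq]
      _ ≤ n.factorial * M / r ^ n / (n.factorial * n.factorial) * (x ^ 2) ^ n := by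
          gcongr
          exact ha n
      _ = M * ((x ^ 2 / r) ^ n / n.factorial) := by rw [div_pow]; field_simp
  have hsum : Summable fun n => M * ((x ^ 2 / r) ^ n / n.factorial) :=
    (Real.summable_pow_div_factorial _).mul_left M
  calc |∑' n, a n / (2 * n).factorial * x ^ (2 * n)|
      ≤ ∑' n, M * ((x ^ 2 / r) ^ n / n.factorial) := by
        simp_rw [← Real.norm_eq_abs] at hterm ⊢
        exact tsum_of_norm_bounded hsum.hasSum hterm
    _ = M * Real.exp (x ^ 2 / r) := by
        rw [tsum_mul_left, Real.exp_eq_exp_ℝ, NormedSpace.exp_eq_tsum_div]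

theorem tendsto_mul_sub_mul_pow_atTop_atBot (c : ℝ) {d : ℝ} (hd : 0 < d) {m : ℕ}
    (hm : 1 < m) :
    Tendsto (fun y : ℝ => c * y - d * y ^ m) atTop atBot := by
  have hfactor : Tendsto (fun y : ℝ => c - d * y ^ (m - 1)) atTop atBot :=
    tendsto_atBot_add_const_left _ c
      (tendsto_neg_atTop_atBot.comp ((tendsto_pow_atTop (by omega)).const_mul_atTop hd))
  refine (tendsto_id.atTop_mul_atBot₀ hfactor).congr fun y => ?_
  rw [id, mul_sub, mul_left_comm, mul_pow_sub_one (by omega)]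
  ring

theorem tendsto_exp_neg_mul_inv_pow_mul_exp_div_nhdsGT_zero {d : ℝ} (hd : 0 < d) {m : ℕ}
    (hm : 1 < m) (c : ℝ) :
    Tendsto (fun t : ℝ => Real.exp (-d * (t ^ m)⁻¹) * Real.exp (c / t)) (𝓝[>] 0) (𝓝 0) := by
  refine (Real.tendsto_exp_atBot.comp ((tendsto_mul_sub_mul_pow_atTop_atBot c hd hm).comp
    tendsto_inv_nhdsGT_zero)).congr fun t => ?_
  simp only [Function.comp_apply, ← Real.exp_add, inv_pow]
  ring_nf

theorem abs_integral_mul_le_of_abs_le_on_support {α : Type*} [MeasurableSpace α]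
    {μ : Measure α} {g φ : α → ℝ} {B : ℝ} (hφ : Integrable φ μ)
    (hg : ∀ x ∈ Function.support φ, |g x| ≤ B) :
    |∫ x, g x * φ x ∂μ| ≤ B * ∫ x, |φ x| ∂μ := by
  rw [← integral_const_mul]
  refine (abs_integral_le_integral_abs).trans (integral_mono_of_nonneg
    (Eventually.of_forall fun x => abs_nonneg _) (hφ.abs.const_mul B)
    (Eventually.of_forall fun x => ?_))
  show |g x * φ x| ≤ B * |φ x|
  by_cases hx : φ x = 0
  · simp [hx]
  · rw [abs_mul]
    exact mul_le_mul_of_nonneg_right (hg x hx) (abs_nonneg _)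

theorem tychonoff_solution_distributional_limit_zero (k : ℕ) (hk : 1 ≤ k)
    (u : ℝ → ℝ → ℝ)
    (hu : u = fun x t => ∑' n : ℕ,
        iteratedDeriv n (fun s : ℝ => Real.exp (-1 / s ^ (2 * k))) t
          / ((2 * n).factorial : ℝ) * x ^ (2 * n)) :
    ∀ φ : ℝ → ℝ, Continuous φ → HasCompactSupport φ →
      Filter.Tendsto (fun t : ℝ => ∫ x : ℝ, u x t * φ x)
        (nhdsWithin 0 (Set.Ioi 0)) (nhds 0) := by
  intro φ hφ hφ_supp
  obtain ⟨ε, hε, hderiv⟩ := exists_abs_iteratedDeriv_exp_neg_inv_pow_le (2 * k)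
  obtain ⟨R, hR⟩ := hφ_supp.isBounded.subset_closedBall 0
  have hbound : ∀ t > 0, |∫ x, u x t * φ x| ≤
      Real.exp (-(1 / 2) * (t ^ (2 * k))⁻¹) * Real.exp (R ^ 2 / (ε * t)) * ∫ x, |φ x| := by
    intro t ht
    refine abs_integral_mul_le_of_abs_le_on_support (hφ.integrable_of_hasCompactSupport hφ_supp)
      fun x hx => ?_
    have hxR : |x| ≤ R := by simpa using hR (subset_tsupport φ hx)
    have hx2 : x ^ 2 ≤ R ^ 2 := sq_le_sq.mpr (hxR.trans (le_abs_self R))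
    rw [hu]
    refine (abs_tsum_div_factorial_two_mul_mul_pow_le (by positivity) (hderiv t ht) x).trans ?_
    gcongr
  have hlimit := (tendsto_exp_neg_mul_inv_pow_mul_exp_div_nhdsGT_zero (d := 1 / 2) (by norm_num)
    (m := 2 * k) (by omega) (R ^ 2 / ε)).mul_const (∫ x, |φ x|)
  rw [zero_mul] at hlimit
  refine squeeze_zero_norm' ?_ hlimit
  filter_upwards [self_mem_nhdsWithin] with t ht
  simpa [div_div] using hbound t ht
end

section
/- Let U : ℝ² × (0,∞) → ℝ be smooth and radial in x (U(x,t) = V(|x|,t)) and set u(x,t) = (−x₂, x₁) U(x,t). Then div(u · ∇u) = −2U² − 2r V V_r where r = |x|; in particular div(u·∇u) is a radial function of x. -/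
lemma aux_neg_mul (q : ℝ → ℝ) (hq : ContinuousAt q 0) :
    HasDerivAt (fun s => -s * q s) (-q 0) 0 := by
  rw [hasDerivAt_iff_tendsto_slope]
  have h1 : (fun s : ℝ => -q s) =ᶠ[nhdsWithin (0:ℝ) {(0:ℝ)}ᶜ] slope (fun s => -s * q s) 0 := by
    filter_upwards [self_mem_nhdsWithin] with s hs
    have hs' : s ≠ 0 := hs
    simp [slope_def_field]
    field_simp
  exact Filter.Tendsto.congr' h1 ((hq.neg.tendsto).mono_left nhdsWithin_le_nhds)

lemma key1 (f : ℝ → ℝ) (hf : ContDiff ℝ (⊤ : ℕ∞) f) (a b : ℝ) (h : a^2 + b^2 ≠ 0) :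
    HasDerivAt (fun s => f (Real.sqrt (s^2 + b^2)))
      (deriv f (Real.sqrt (a^2+b^2)) * (a / Real.sqrt (a^2+b^2))) a := by
  have hpos : 0 < a^2 + b^2 := lt_of_le_of_ne (by positivity) (Ne.symm h)
  have hr : Real.sqrt (a^2+b^2) ≠ 0 := by
    rw [Real.sqrt_ne_zero']; exact hpos
  have hs : HasDerivAt (fun s : ℝ => s^2 + b^2) (2*a) a := by
    simpa using ((hasDerivAt_pow 2 a).add_const (b^2))
  have hsq : HasDerivAt Real.sqrt (1 / (2 * Real.sqrt (a^2+b^2))) (a^2+b^2) :=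
    Real.hasDerivAt_sqrt h
  have hcomp := hsq.comp a hs
  have hf' : HasDerivAt f (deriv f (Real.sqrt (a^2+b^2))) (Real.sqrt (a^2+b^2)) :=
    (hf.differentiable (by simp) _).hasDerivAt
  have hfin := hf'.comp a hcomp
  refine hfin.congr_deriv ?_
  field_simp

lemma key2 (f : ℝ → ℝ) (hf : ContDiff ℝ (⊤ : ℕ∞) f) (a b : ℝ) (h : a^2 + b^2 ≠ 0) :
    HasDerivAt (fun s => f (Real.sqrt (a^2 + s^2)))
      (deriv f (Real.sqrt (a^2+b^2)) * (b / Real.sqrt (a^2+b^2))) b := by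
  have := key1 f hf b a (by rwa [add_comm])
  simpa [add_comm] using this

noncomputable def pd1 (f : ℝ × ℝ → ℝ) (x : ℝ × ℝ) : ℝ := deriv (fun s => f (s, x.2)) x.1
noncomputable def pd2 (f : ℝ × ℝ → ℝ) (x : ℝ × ℝ) : ℝ := deriv (fun s => f (x.1, s)) x.2

theorem div_convection_radial (V : ℝ → ℝ → ℝ)
    (hV : ContDiff ℝ (⊤ : ℕ∞) (fun p : ℝ × ℝ => V p.1 p.2))
    (U : ℝ → ℝ × ℝ → ℝ)
    (hU : U = fun t x => V (Real.sqrt (x.1 ^ 2 + x.2 ^ 2)) t)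
    (u₁ u₂ : ℝ → ℝ × ℝ → ℝ)
    (hu₁ : u₁ = fun t x => -x.2 * U t x) (hu₂ : u₂ = fun t x => x.1 * U t x) :
    ∀ t : ℝ, 0 < t → ∀ x : ℝ × ℝ,
      pd1 (fun y => u₁ t y * pd1 (u₁ t) y + u₂ t y * pd2 (u₁ t) y) x +
      pd2 (fun y => u₁ t y * pd1 (u₂ t) y + u₂ t y * pd2 (u₂ t) y) x =
        -2 * (U t x) ^ 2 - 2 * Real.sqrt (x.1 ^ 2 + x.2 ^ 2) *
          V (Real.sqrt (x.1 ^ 2 + x.2 ^ 2)) t *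
          deriv (fun r => V r t) (Real.sqrt (x.1 ^ 2 + x.2 ^ 2)) := by
  intro t ht x
  have hfC : ContDiff ℝ (⊤ : ℕ∞) (fun r => V r t) := hV.comp (contDiff_id.prodMk contDiff_const)
  -- abbreviations
  set f : ℝ → ℝ := fun r => V r t with hfdef
  have hA : (fun y => u₁ t y * pd1 (u₁ t) y + u₂ t y * pd2 (u₁ t) y)
      = fun y : ℝ × ℝ => -y.1 * (V (Real.sqrt (y.1 ^ 2 + y.2 ^ 2)) t) ^ 2 := by
    funext y
    obtain ⟨a, b⟩ := y
    by_cases h : a ^ 2 + b ^ 2 = 0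
    · have ha : a = 0 := by nlinarith [sq_nonneg a, sq_nonneg b]
      have hb : b = 0 := by nlinarith [sq_nonneg a, sq_nonneg b]
      subst ha hb
      simp [hu₁, hu₂]
    · have hr : Real.sqrt (a ^ 2 + b ^ 2) ≠ 0 := by
        rw [Real.sqrt_ne_zero']
        exact lt_of_le_of_ne (by positivity) (Ne.symm h)
      set r := Real.sqrt (a ^ 2 + b ^ 2) with hrdef
      have d1 : pd1 (u₁ t) (a, b) = -b * (deriv f r * (a / r)) := by
        simp only [pd1, hu₁, hU]
        exact ((key1 f hfC a b h).const_mul (-b)).deriv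
      have d2 : pd2 (u₁ t) (a, b) = -1 * f r + -b * (deriv f r * (b / r)) := by
        simp only [pd2, hu₁, hU]
        exact (((hasDerivAt_id b).neg).mul (key2 f hfC a b h)).deriv
      have d3 : pd1 (u₂ t) (a, b) = 1 * f r + a * (deriv f r * (a / r)) := by
        simp only [pd1, hu₂, hU]
        exact ((hasDerivAt_id a).mul (key1 f hfC a b h)).deriv
      have d4 : pd2 (u₂ t) (a, b) = a * (deriv f r * (b / r)) := by
        simp only [pd2, hu₂, hU]
        exact ((key2 f hfC a b h).const_mul a).deriv
      rw [d1, d2]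
      simp only [hu₁, hu₂, hU]
      show -b * f r * (-b * (deriv f r * (a / r))) +
          a * f r * (-1 * f r + -b * (deriv f r * (b / r))) = -a * (f r) ^ 2
      field_simp
      ring
  have hB : (fun y => u₁ t y * pd1 (u₂ t) y + u₂ t y * pd2 (u₂ t) y)
      = fun y : ℝ × ℝ => -y.2 * (V (Real.sqrt (y.1 ^ 2 + y.2 ^ 2)) t) ^ 2 := by
    funext y
    obtain ⟨a, b⟩ := y
    by_cases h : a ^ 2 + b ^ 2 = 0
    · have ha : a = 0 := by nlinarith [sq_nonneg a, sq_nonneg b]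
      have hb : b = 0 := by nlinarith [sq_nonneg a, sq_nonneg b]
      subst ha hb
      simp [hu₁, hu₂]
    · have hr : Real.sqrt (a ^ 2 + b ^ 2) ≠ 0 := by
        rw [Real.sqrt_ne_zero']
        exact lt_of_le_of_ne (by positivity) (Ne.symm h)
      set r := Real.sqrt (a ^ 2 + b ^ 2) with hrdef
      have d3 : pd1 (u₂ t) (a, b) = 1 * f r + a * (deriv f r * (a / r)) := by
        simp only [pd1, hu₂, hU]
        exact ((hasDerivAt_id a).mul (key1 f hfC a b h)).deriv
      have d4 : pd2 (u₂ t) (a, b) = a * (deriv f r * (b / r)) := by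
        simp only [pd2, hu₂, hU]
        exact ((key2 f hfC a b h).const_mul a).deriv
      rw [d3, d4]
      simp only [hu₁, hu₂, hU]
      show -b * f r * (1 * f r + a * (deriv f r * (a / r))) +
          a * f r * (a * (deriv f r * (b / r))) = -b * (f r) ^ 2
      field_simp
      ring
  rw [hA, hB]
  obtain ⟨a, b⟩ := x
  by_cases h : a ^ 2 + b ^ 2 = 0
  · have ha : a = 0 := by nlinarith [sq_nonneg a, sq_nonneg b]
    have hb : b = 0 := by nlinarith [sq_nonneg a, sq_nonneg b]
    subst ha hb
    have hq : Continuous (fun s : ℝ => (V (Real.sqrt (s ^ 2 + 0 ^ 2)) t) ^ 2) := by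
      have h1 : Continuous (fun s : ℝ => Real.sqrt (s ^ 2 + 0 ^ 2)) := by continuity
      exact (hfC.continuous.comp h1).pow 2
    have hq' : Continuous (fun s : ℝ => (V (Real.sqrt (0 ^ 2 + s ^ 2)) t) ^ 2) := by
      have h1 : Continuous (fun s : ℝ => Real.sqrt (0 ^ 2 + s ^ 2)) := by continuity
      exact (hfC.continuous.comp h1).pow 2
    have e1 : pd1 (fun y : ℝ × ℝ => -y.1 * (V (Real.sqrt (y.1 ^ 2 + y.2 ^ 2)) t) ^ 2) (0, 0)
        = -(V (Real.sqrt ((0:ℝ) ^ 2 + 0 ^ 2)) t) ^ 2 := by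
      simp only [pd1]
      exact (aux_neg_mul _ hq.continuousAt).deriv
    have e2 : pd2 (fun y : ℝ × ℝ => -y.2 * (V (Real.sqrt (y.1 ^ 2 + y.2 ^ 2)) t) ^ 2) (0, 0)
        = -(V (Real.sqrt ((0:ℝ) ^ 2 + 0 ^ 2)) t) ^ 2 := by
      simp only [pd2]
      exact (aux_neg_mul _ hq'.continuousAt).deriv
    rw [e1, e2, hU]
    simp
    ring
  · have hr : Real.sqrt (a ^ 2 + b ^ 2) ≠ 0 := by
      rw [Real.sqrt_ne_zero']
      exact lt_of_le_of_ne (by positivity) (Ne.symm h)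
    set r := Real.sqrt (a ^ 2 + b ^ 2) with hrdef
    have hr2 : r * r = a ^ 2 + b ^ 2 := Real.mul_self_sqrt (by positivity)
    have e1 : pd1 (fun y : ℝ × ℝ => -y.1 * (V (Real.sqrt (y.1 ^ 2 + y.2 ^ 2)) t) ^ 2) (a, b)
        = -1 * (f r) ^ 2 + -a * (2 * f r ^ 1 * (deriv f r * (a / r))) := by
      simp only [pd1]
      exact (((hasDerivAt_id a).neg).mul ((key1 f hfC a b h).pow 2)).deriv
    have e2 : pd2 (fun y : ℝ × ℝ => -y.2 * (V (Real.sqrt (y.1 ^ 2 + y.2 ^ 2)) t) ^ 2) (a, b)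
        = -1 * (f r) ^ 2 + -b * (2 * f r ^ 1 * (deriv f r * (b / r))) := by
      simp only [pd2]
      exact (((hasDerivAt_id b).neg).mul ((key2 f hfC a b h).pow 2)).deriv
    rw [e1, e2, hU]
    show -1 * (f r) ^ 2 + -a * (2 * f r ^ 1 * (deriv f r * (a / r))) +
        (-1 * (f r) ^ 2 + -b * (2 * f r ^ 1 * (deriv f r * (b / r)))) =
        -2 * (f r) ^ 2 - 2 * r * f r * deriv f r
    field_simp
    linear_combination (2 * f r * deriv f r) * hr2
end
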